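/- arXiv:2409.18902 — 5 statements merged into one kernel-verified Lean document; each statement's English description precedes it below -/
import Mathlib

section
/- Let w: E → ℝ be a generic weight function on the edges of a directed graph D, meaning that for every signed cycle C⁺ ⊔ C⁻, the sum of w over C⁺ differs from the sum of w over C⁻. Then the circuit signature cir^w, which selects for each cycle the orientation whose positive arc has strictly larger total weight, is acyclic: no nontrivial nonnegative linear combination of the vectors χ of the selected signed cycles equals the zero vector. -/
open Finset Pointwise

noncomputable section

variable {V E ι : Type*}

/-- The vector `x_f ∈ ℝ^V` of an edge `f` with tail `t f` and head `h f`: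
`+1` at the head, `-1` at the tail, `0` elsewhere (so `0` for a loop). -/
def xvec [DecidableEq V] (t h : E → V) (f : E) : V → ℝ :=
  fun v => (if v = h f then 1 else 0) - (if v = t f then 1 else 0)

/-- The extended root polytope of the subgraph with edge set `S`:
`conv({0} ∪ {x_f : f ∈ S})`. -/
def rootPolyOn [DecidableEq V] (t h : E → V) (S : Set E) : Set (V → ℝ) :=
  convexHull ℝ ({0} ∪ (xvec t h '' S))

/-- The underlying (simple) undirected graph of the edges in `S`. -/
def underlyingOn (t h : E → V) (S : Set E) : SimpleGraph V :=
  SimpleGraph.fromRel (fun u v => ∃ f ∈ S, t f = u ∧ h f = v)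

/-- A spanning tree: a set of edges whose underlying graph is connected and which
has `|V| - 1` edges. -/
def IsSpanningTree [Fintype V] (t h : E → V) (T : Finset E) : Prop :=
  (underlyingOn t h ↑T).Connected ∧ T.card + 1 = Fintype.card V

/-- The number of lattice points of the `k`-th dilate of `Q`. -/
def latCount [Fintype ι] (Q : Set (ι → ℝ)) (k : ℕ) : ℕ :=
  Nat.card {p : ι → ℤ // (fun i => (p i : ℝ)) ∈ (k : ℝ) • Q}

/-- The Ehrhart series of `Q` as a formal power series. -/
def ehrSeries [Fintype ι] (Q : Set (ι → ℝ)) : PowerSeries ℤ :=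
  PowerSeries.mk fun k => (latCount Q k : ℤ)

/-- The dimension of a polytope: the rank of its vector span. -/
def pdim (Q : Set (ι → ℝ)) : ℕ := Module.finrank ℝ ↥(vectorSpan ℝ Q)

/-- `p` is the `h^*`-polynomial of `Q`: `(1-t)^{dim Q + 1} · Ehr_Q(t) = p(t)`. -/
def IsHStar [Fintype ι] (Q : Set (ι → ℝ)) (p : Polynomial ℤ) : Prop :=
  (1 - PowerSeries.X) ^ (pdim Q + 1) * ehrSeries Q = PowerSeries.mk fun i => p.coeff i

/-- The `±1` vector of a signed cycle with positive arc `Cp` and negative arc `Cm`. -/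
def chiVec [DecidableEq E] (Cp Cm : Finset E) : E → ℝ :=
  fun f => (if f ∈ Cp then 1 else 0) - (if f ∈ Cm then 1 else 0)

/-- A circulation: an assignment of reals to edges with zero net flow at each vertex. -/
def IsCirculation [Fintype E] [DecidableEq V] (t h : E → V) (φ : E → ℝ) : Prop :=
  ∑ f, φ f • xvec t h f = 0

/-- `(Cp, Cm)` is a signed cycle: the arcs are disjoint, the union is nonempty, the
`±1` vector is a circulation, and the support `Cp ∪ Cm` is minimal among supports of
nonzero circulations (i.e. it is a circuit of the graphic oriented matroid). -/
def IsSignedCycle [Fintype E] [DecidableEq E] [DecidableEq V] (t h : E → V)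
    (Cp Cm : Finset E) : Prop :=
  Disjoint Cp Cm ∧ (Cp ∪ Cm).Nonempty ∧ IsCirculation t h (chiVec Cp Cm) ∧
    ∀ φ : E → ℝ, IsCirculation t h φ → φ ≠ 0 →
      (∀ f, φ f ≠ 0 → f ∈ Cp ∪ Cm) → ∀ f ∈ Cp ∪ Cm, φ f ≠ 0

/-- A circuit signature: a choice, for each cycle, of exactly one of its two
orientations. -/
def IsCircuitSignature [Fintype E] [DecidableEq E] [DecidableEq V] (t h : E → V)
    (σ : Set (Finset E × Finset E)) : Prop :=
  (∀ q ∈ σ, IsSignedCycle t h q.1 q.2) ∧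
    ∀ Cp Cm : Finset E, IsSignedCycle t h Cp Cm → ((Cp, Cm) ∈ σ ↔ (Cm, Cp) ∉ σ)

/-- Acyclicity of a circuit signature: no nontrivial nonnegative combination of the
vectors of the chosen signed cycles vanishes. -/
def IsAcyclicSig [DecidableEq E] (σ : Set (Finset E × Finset E)) : Prop :=
  ∀ (s : Finset (Finset E × Finset E)) (a : Finset E × Finset E → ℝ),
    ↑s ⊆ σ → (∀ q, 0 ≤ a q) → (∃ q ∈ s, a q ≠ 0) →
      ∑ q ∈ s, a q • chiVec q.1 q.2 ≠ 0

/-- A weight function is generic if the two arcs of every cycle have different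
total weights. -/
def GenericWeight [Fintype E] [DecidableEq E] [DecidableEq V] (t h : E → V)
    (w : E → ℝ) : Prop :=
  ∀ Cp Cm : Finset E, IsSignedCycle t h Cp Cm → ∑ f ∈ Cp, w f ≠ ∑ f ∈ Cm, w f

/-- The circuit signature `cir^w`: orient each cycle so that the positive arc has
the larger total `w`-weight. -/
def cirw [Fintype E] [DecidableEq E] [DecidableEq V] (t h : E → V) (w : E → ℝ) :
    Set (Finset E × Finset E) :=
  {q | IsSignedCycle t h q.1 q.2 ∧ ∑ f ∈ q.2, w f < ∑ f ∈ q.1, w f}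

/-- `tree(D,σ)`: spanning trees `T` such that every non-tree edge `f` lies in the
positive arc of the (σ-oriented) fundamental cycle of `f`, i.e. of the unique cycle
contained in `T ∪ {f}`. -/
def treeSet [Fintype V] [Fintype E] [DecidableEq V] [DecidableEq E] (t h : E → V)
    (σ : Set (Finset E × Finset E)) : Set (Finset E) :=
  {T | IsSpanningTree t h T ∧
    ∀ f ∉ T, ∀ Cp Cm : Finset E, (Cp, Cm) ∈ σ → Cp ∪ Cm ⊆ insert f T → f ∈ Cp}

/-- `F` is a face of `Q`: the locus where some linear functional bounded above on `Q`
attains its maximum. -/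
def IsFaceOf (Q F : Set (ι → ℝ)) : Prop :=
  ∃ (l : (ι → ℝ) →ₗ[ℝ] ℝ) (c : ℝ), (∀ y ∈ Q, l y ≤ c) ∧ F = {y ∈ Q | l y = c}

/-- `F` is a facet of `Q`: a face of codimension one. -/
def IsFacetOf (Q F : Set (ι → ℝ)) : Prop :=
  IsFaceOf Q F ∧ pdim F + 1 = pdim Q

end

section Aux

variable {V E : Type*} [Fintype V] [Fintype E] [DecidableEq V] [DecidableEq E]

lemma chiVec_swap (Cp Cm : Finset E) : chiVec Cm Cp = -chiVec Cp Cm := by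
  funext f; simp [chiVec]

lemma signedCycle_symm {t h : E → V} {Cp Cm : Finset E}
    (hc : IsSignedCycle t h Cp Cm) : IsSignedCycle t h Cm Cp := by
  obtain ⟨hd, hne, hcir, hmin⟩ := hc
  refine ⟨hd.symm, by rwa [Finset.union_comm], ?_, ?_⟩
  · unfold IsCirculation at hcir ⊢
    rw [chiVec_swap]
    simp only [Pi.neg_apply, neg_smul, Finset.sum_neg_distrib, hcir, neg_zero]
  · intro φ h1 h2 h3 f hf
    exact hmin φ h1 h2 (by simpa [Finset.union_comm] using h3) f
      (by simpa [Finset.union_comm] using hf)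

lemma weight_chi (w : E → ℝ) (Cp Cm : Finset E) :
    ∑ f, w f * chiVec Cp Cm f = ∑ f ∈ Cp, w f - ∑ f ∈ Cm, w f := by
  simp [chiVec, mul_sub, mul_ite, Finset.sum_sub_distrib, Finset.sum_ite_mem]

end Aux

/-- for a generic weight function `w`, `cir^w` is a circuit signature
and is acyclic. -/
theorem stmt4 {V E : Type*} [Fintype V] [Fintype E] [DecidableEq V] [DecidableEq E]
    (t h : E → V) (w : E → ℝ) (hw : GenericWeight t h w) :
    IsCircuitSignature t h (cirw t h w) ∧ IsAcyclicSig (cirw t h w) := by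
  constructor
  · constructor
    · exact fun q hq => hq.1
    · intro Cp Cm hc
      have hne := hw Cp Cm hc
      constructor
      · rintro ⟨_, hlt⟩ ⟨_, hlt'⟩
        exact absurd (lt_trans hlt hlt') (lt_irrefl _)
      · intro hnot
        refine ⟨hc, ?_⟩
        rcases lt_or_gt_of_ne hne with hlt | hgt
        · exact absurd ⟨signedCycle_symm hc, hlt⟩ hnot
        · exact hgt
  · intro s a hs ha ⟨q0, hq0s, hq0⟩ heq
    have key : ∑ q ∈ s, a q * (∑ f ∈ q.1, w f - ∑ f ∈ q.2, w f) = 0 := by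
      have := congrArg (fun φ : E → ℝ => ∑ f, w f * φ f) heq
      simp only [Pi.zero_apply, mul_zero, Finset.sum_const_zero] at this
      rw [← this]
      simp only [Finset.sum_apply, Pi.smul_apply, smul_eq_mul, Finset.mul_sum]
      rw [Finset.sum_comm]
      refine Finset.sum_congr rfl fun q _ => ?_
      rw [← weight_chi w q.1 q.2, Finset.mul_sum]
      exact Finset.sum_congr rfl fun f _ => by ring
    have pos : 0 < ∑ q ∈ s, a q * (∑ f ∈ q.1, w f - ∑ f ∈ q.2, w f) := by
      apply Finset.sum_pos'
      · intro q hq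
        have hcq := hs hq
        have : (0:ℝ) < ∑ f ∈ q.1, w f - ∑ f ∈ q.2, w f := sub_pos.mpr hcq.2
        exact mul_nonneg (ha q) this.le
      · refine ⟨q0, hq0s, ?_⟩
        have hcq := hs hq0s
        have hd : (0:ℝ) < ∑ f ∈ q0.1, w f - ∑ f ∈ q0.2, w f := sub_pos.mpr hcq.2
        exact mul_pos (lt_of_le_of_ne (ha q0) (Ne.symm hq0)) hd
    exact absurd key (ne_of_gt pos)
end

section
/- A circuit signature σ of a directed graph D is acyclic if and only if σ = cir^w for some generic weight function w: E → ℝ, where cir^w selects for each cycle the orientation whose positive arc has larger total w-weight. -/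
open Finset Pointwise

/-!
Acyclicity of `σ` says exactly that `0` is not in the convex hull of the finitely many vectors
`χ_C`, `C ∈ σ`. Strict separation of `0` from this compact convex set (Gordan's alternative) gives
a weight `w` with `⟨w, χ_C⟩ = w(C⁺) - w(C⁻) > 0` for every chosen signed cycle. As `σ` contains
exactly one orientation of each cycle, `w` is generic and `σ = cir^w`. Conversely, pairing a
vanishing nonnegative combination of the `χ_C`, `C ∈ cir^w`, with `w` gives a contradiction.
-/

open Matrix

theorem exists_nonneg_sum_smul_eq_of_mem_convexHull {α M : Type*} [AddCommGroup M]
    [Module ℝ M] (s : Finset α) (v : α → M) {x : M} (hx : x ∈ convexHull ℝ (v '' s)) :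
    ∃ a : α → ℝ, (∀ q, 0 ≤ a q) ∧ ∑ q ∈ s, a q = 1 ∧ ∑ q ∈ s, a q • v q = x := by
  classical
  let L : (α → ℝ) →ₗ[ℝ] M := ∑ q ∈ s, (LinearMap.proj q).smulRight (v q)
  let K : Set (α → ℝ) := {a | 0 ≤ a ∧ ∑ q ∈ s, a q = 1}
  have hK : Convex ℝ K := by
    rintro a ⟨ha₀, ha₁⟩ b ⟨hb₀, hb₁⟩ μ ν hμ hν hμν
    refine ⟨add_nonneg (smul_nonneg hμ ha₀) (smul_nonneg hν hb₀), ?_⟩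
    simp only [Pi.add_apply, Pi.smul_apply, smul_eq_mul, Finset.sum_add_distrib,
      ← Finset.mul_sum, ha₁, hb₁, mul_one, hμν]
  have hvK : v '' s ⊆ L '' K := by
    rintro _ ⟨q, hq, rfl⟩
    rw [Finset.mem_coe] at hq
    exact ⟨Pi.single q 1, ⟨(Pi.single_nonneg (i := q)).2 zero_le_one, by simp [hq]⟩,
      by simp [L, Pi.single_apply, hq]⟩
  obtain ⟨a, ⟨ha₀, ha₁⟩, rfl⟩ := convexHull_min hvK (hK.linear_image L) hx
  exact ⟨a, ha₀, ha₁, by simp [L]⟩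

theorem exists_dotProduct_pos_of_forall_sum_smul_ne_zero {α ι : Type*} [Fintype ι]
    (s : Finset α) (v : α → ι → ℝ)
    (hv : ∀ a : α → ℝ, (∀ q, 0 ≤ a q) → (∃ q ∈ s, a q ≠ 0) → ∑ q ∈ s, a q • v q ≠ 0) :
    ∃ w : ι → ℝ, ∀ q ∈ s, 0 < w ⬝ᵥ v q := by
  classical
  have h₀ : (0 : ι → ℝ) ∉ convexHull ℝ (v '' s) := fun h₀ => by
    obtain ⟨a, ha₀, ha₁, hsum⟩ := exists_nonneg_sum_smul_eq_of_mem_convexHull s v h₀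
    exact hv a ha₀ (Finset.exists_ne_zero_of_sum_ne_zero (ha₁ ▸ one_ne_zero)) hsum
  obtain ⟨f, u, hf₀, hfu⟩ := geometric_hahn_banach_point_closed (convex_convexHull ℝ _)
    ((s.finite_toSet.image v).isCompact_convexHull (𝕜 := ℝ)).isClosed h₀
  refine ⟨(dotProductEquiv ℝ ι).symm f.toLinearMap, fun q hq => ?_⟩
  have hfq := hfu _ (subset_convexHull ℝ _ ⟨q, hq, rfl⟩)
  rw [map_zero] at hf₀
  rw [← dotProductEquiv_apply_apply, LinearEquiv.apply_symm_apply]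
  exact hf₀.trans hfq

section CircuitSignature

variable {V E : Type*} [Fintype E] [DecidableEq E] [DecidableEq V]

theorem dotProduct_chiVec (w : E → ℝ) (Cp Cm : Finset E) :
    w ⬝ᵥ chiVec Cp Cm = ∑ f ∈ Cp, w f - ∑ f ∈ Cm, w f := by
  simp only [dotProduct, chiVec, mul_sub, mul_ite, mul_one, mul_zero, Finset.sum_sub_distrib,
    Finset.sum_ite_mem, Finset.univ_inter]

theorem dotProduct_chiVec_pos_iff {w : E → ℝ} {Cp Cm : Finset E} :
    0 < w ⬝ᵥ chiVec Cp Cm ↔ ∑ f ∈ Cm, w f < ∑ f ∈ Cp, w f := by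
  rw [dotProduct_chiVec, sub_pos]

theorem isAcyclicSig_of_forall_dotProduct_pos {σ : Set (Finset E × Finset E)} (w : E → ℝ)
    (hw : ∀ q ∈ σ, 0 < w ⬝ᵥ chiVec q.1 q.2) : IsAcyclicSig σ := by
  rintro s a hsσ ha ⟨q₀, hq₀, ha₀⟩ hsum
  have hpos : 0 < w ⬝ᵥ ∑ q ∈ s, a q • chiVec q.1 q.2 := by
    simp only [dotProduct_sum, dotProduct_smul, smul_eq_mul]
    exact Finset.sum_pos' (fun q hq => mul_nonneg (ha q) (hw q (hsσ hq)).le)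
      ⟨q₀, hq₀, mul_pos ((ha q₀).lt_of_ne' ha₀) (hw q₀ (hsσ hq₀))⟩
  simp [hsum] at hpos

theorem IsAcyclicSig.exists_dotProduct_pos {σ : Set (Finset E × Finset E)}
    (hσ : IsAcyclicSig σ) : ∃ w : E → ℝ, ∀ q ∈ σ, 0 < w ⬝ᵥ chiVec q.1 q.2 := by
  have hfin : σ.Finite := Set.toFinite σ
  obtain ⟨w, hw⟩ := exists_dotProduct_pos_of_forall_sum_smul_ne_zero hfin.toFinset
    (fun q => chiVec q.1 q.2) (hσ _ · (by simp))
  exact ⟨w, fun q hq => hw q (hfin.mem_toFinset.2 hq)⟩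

namespace IsCircuitSignature

variable {t h : E → V} {σ : Set (Finset E × Finset E)}

theorem mem_or_swap_mem (hσ : IsCircuitSignature t h σ) {Cp Cm : Finset E}
    (hC : IsSignedCycle t h Cp Cm) : (Cp, Cm) ∈ σ ∨ (Cm, Cp) ∈ σ := by
  have := hσ.2 Cp Cm hC
  tauto

theorem genericWeight {w : E → ℝ} (hσ : IsCircuitSignature t h σ)
    (hw : ∀ q ∈ σ, 0 < w ⬝ᵥ chiVec q.1 q.2) : GenericWeight t h w := by
  intro Cp Cm hC
  rcases hσ.mem_or_swap_mem hC with hmem | hmem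
  · exact (dotProduct_chiVec_pos_iff.1 (hw _ hmem)).ne'
  · exact (dotProduct_chiVec_pos_iff.1 (hw _ hmem)).ne

theorem eq_cirw {w : E → ℝ} (hσ : IsCircuitSignature t h σ)
    (hw : ∀ q ∈ σ, 0 < w ⬝ᵥ chiVec q.1 q.2) : σ = cirw t h w := by
  ext ⟨Cp, Cm⟩
  refine ⟨fun hq => ⟨hσ.1 _ hq, dotProduct_chiVec_pos_iff.1 (hw _ hq)⟩, ?_⟩
  rintro ⟨hC, hlt⟩
  refine (hσ.mem_or_swap_mem hC).resolve_right fun hswap => ?_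
  exact (dotProduct_chiVec_pos_iff.1 (hw _ hswap)).not_gt hlt

end IsCircuitSignature

end CircuitSignature

theorem stmt5_general {V E : Type*} [Fintype E] [DecidableEq V] [DecidableEq E]
    (t h : E → V) (σ : Set (Finset E × Finset E)) (hσ : IsCircuitSignature t h σ) :
    IsAcyclicSig σ ↔ ∃ w : E → ℝ, GenericWeight t h w ∧ σ = cirw t h w := by
  constructor
  · intro hacyc
    obtain ⟨w, hw⟩ := hacyc.exists_dotProduct_pos
    exact ⟨w, hσ.genericWeight hw, hσ.eq_cirw hw⟩
  · rintro ⟨w, -, rfl⟩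
    exact isAcyclicSig_of_forall_dotProduct_pos w fun q hq => dotProduct_chiVec_pos_iff.2 hq.2

/-- a circuit signature is acyclic if and only if it arises as `cir^w`
for some generic weight function `w`. -/
theorem stmt5 {V E : Type*} [Fintype V] [Fintype E] [DecidableEq V] [DecidableEq E]
    (t h : E → V) (σ : Set (Finset E × Finset E)) (hσ : IsCircuitSignature t h σ) :
    IsAcyclicSig σ ↔ ∃ w : E → ℝ, GenericWeight t h w ∧ σ = cirw t h w :=
  stmt5_general t h σ hσ
end

section
/- Let D be a weakly connected digraph without loops or parallel edges. Fix an ordering of E in which a chosen edge e is minimal, with position function π, and let w(f) = 1 − 2^{−π(f)−1}. Then w is generic and the circuit signature cir^w is long arc positive: for every cycle C, the arc selected as positive (the one of larger w-weight) has at least as many edges as the negative arc. -/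
open Finset Pointwise

lemma geomIcoSum (m : ℕ) : ∀ N, m ≤ N →
    ∑ j ∈ Finset.Ico m N, ((1 : ℝ)/2)^(j+1) = (1/2)^m - (1/2)^N := by
  intro N hN
  induction N, hN using Nat.le_induction with
  | base => simp
  | succ N hN ih =>
      rw [Finset.sum_Ico_succ_top hN, ih]
      ring

lemma sumPowLt (S : Finset ℕ) (m : ℕ) (hS : ∀ j ∈ S, m ≤ j) :
    ∑ j ∈ S, ((1 : ℝ)/2)^(j+1) < (1/2)^m := by
  set N : ℕ := max (S.sup id + 1) m with hNdef
  have hsub : S ⊆ Finset.Ico m N := by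
    intro j hj
    refine Finset.mem_Ico.2 ⟨hS j hj, ?_⟩
    have : j ≤ S.sup id := Finset.le_sup (f := id) hj
    omega
  have h1 : ∑ j ∈ S, ((1 : ℝ)/2)^(j+1) ≤ ∑ j ∈ Finset.Ico m N, ((1 : ℝ)/2)^(j+1) :=
    Finset.sum_le_sum_of_subset_of_nonneg hsub (by intros; positivity)
  have h2 : ∑ j ∈ Finset.Ico m N, ((1 : ℝ)/2)^(j+1) = (1/2)^m - (1/2)^N :=
    geomIcoSum m N (le_max_right _ _)
  have h3 : (0 : ℝ) < (1/2)^N := by positivity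
  linarith

/-- for a weakly connected loopless digraph without parallel edges,
an edge ordering `π` with `e` minimal, and weights `w(f) = 1 - 2^{-π(f)-1}`, the
weight function `w` is generic and the signature `cir^w` is long arc positive. -/
theorem stmt15 {V E : Type*} [Fintype V] [Fintype E] [DecidableEq V] [DecidableEq E]
    (t h : E → V) (hconn : (underlyingOn t h Set.univ).Connected)
    (hloop : ∀ f, t f ≠ h f)
    (hpar : ∀ f g, f ≠ g → ¬(t f = t g ∧ h f = h g))
    (e : E) (π : E → ℕ) (hinj : Function.Injective π)
    (hmin : ∀ f, f ≠ e → π e < π f)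
    (w : E → ℝ) (hw : ∀ f, w f = 1 - (1 / 2 : ℝ) ^ (π f + 1)) :
    GenericWeight t h w ∧ ∀ q ∈ cirw t h w, q.2.card ≤ q.1.card := by
  set eps : Finset E → ℝ := fun F => ∑ f ∈ F, ((1 : ℝ)/2)^(π f + 1) with hepsdef
  have hsum : ∀ F : Finset E, ∑ f ∈ F, w f = F.card - eps F := by
    intro F
    simp only [hepsdef, hw]
    rw [Finset.sum_sub_distrib]
    simp
  have heps_eq : ∀ F : Finset E, eps F = ∑ j ∈ F.image π, ((1 : ℝ)/2)^(j+1) := by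
    intro F
    rw [Finset.sum_image (fun a _ b _ hab => hinj hab)]
  have heps_nonneg : ∀ F : Finset E, 0 ≤ eps F := by
    intro F; apply Finset.sum_nonneg; intros; positivity
  have heps_lt1 : ∀ F : Finset E, eps F < 1 := by
    intro F
    rw [heps_eq]
    simpa using sumPowLt (F.image π) 0 (by simp)
  have key : ∀ A B : Finset E, ∀ f ∈ A, Disjoint A B →
      (∀ g ∈ A ∪ B, π f ≤ π g) → eps B < eps A := by
    intro A B f hfA hdisj hminf
    have hBlt : eps B < (1/2)^(π f + 1) := by
      rw [heps_eq]
      apply sumPowLt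
      intro j hj
      obtain ⟨g, hgB, rfl⟩ := Finset.mem_image.1 hj
      have hne : g ≠ f := fun hgf => (Finset.disjoint_left.1 hdisj hfA) (hgf ▸ hgB)
      have h1 : π f ≤ π g := hminf g (Finset.mem_union_right _ hgB)
      have h2 : π g ≠ π f := fun hh => hne (hinj hh)
      omega
    have hAge : (1/2 : ℝ)^(π f + 1) ≤ eps A :=
      Finset.single_le_sum (f := fun g => ((1:ℝ)/2)^(π g + 1))
        (fun i _ => by positivity) hfA
    linarith
  have hne : ∀ Cp Cm : Finset E, IsSignedCycle t h Cp Cm → eps Cp ≠ eps Cm := by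
    intro Cp Cm hsc heq
    obtain ⟨hdisj, hnon, -⟩ := hsc
    obtain ⟨f, hf, hminf⟩ := Finset.exists_min_image (Cp ∪ Cm) π hnon
    rcases Finset.mem_union.1 hf with hfp | hfm
    · exact absurd heq (LT.lt.ne' (key Cp Cm f hfp hdisj hminf))
    · refine absurd heq (ne_of_lt (key Cm Cp f hfm hdisj.symm ?_))
      intro g hg
      exact hminf g (by rwa [Finset.union_comm])
  constructor
  · intro Cp Cm hsc heqw
    rw [hsum, hsum] at heqw
    have h1 := heps_nonneg Cp
    have h2 := heps_nonneg Cm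
    have h3 := heps_lt1 Cp
    have h4 := heps_lt1 Cm
    have hcard : Cp.card = Cm.card := by
      have hlt1 : (Cp.card : ℝ) < (Cm.card : ℝ) + 1 := by linarith
      have hlt2 : (Cm.card : ℝ) < (Cp.card : ℝ) + 1 := by linarith
      have a1 : Cp.card < Cm.card + 1 := by exact_mod_cast hlt1
      have a2 : Cm.card < Cp.card + 1 := by exact_mod_cast hlt2
      omega
    have : eps Cp = eps Cm := by
      rw [hcard] at heqw; linarith
    exact hne Cp Cm hsc this
  · rintro ⟨Cp, Cm⟩ ⟨hsc, hlt⟩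
    simp only at hlt ⊢
    rw [hsum, hsum] at hlt
    have h2 := heps_nonneg Cp
    have h4 := heps_lt1 Cm
    have : (Cm.card : ℝ) < (Cp.card : ℝ) + 1 := by linarith
    have : Cm.card < Cp.card + 1 := by exact_mod_cast this
    omega
end

section
/- Let D be a weakly connected directed graph and e a bridge of D. Then the extended root polytope Q̃_D is the cone over Q̃_{D−e} with apex x_e (i.e., Q̃_D = conv(Q̃_{D−e} ∪ {x_e}) and x_e is not in the affine hull of Q̃_{D−e}), and h*_{Q̃_D} = h*_{Q̃_{D−e}}. -/
open Finset Pointwise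

/-!
Let `S` be the vertex set of the component of `D - e` containing the head of `e`. The linear
functional `y ↦ ∑_{v ∈ S} y v` vanishes on every `x_f` with `f ≠ e` and takes the value `1` on
`x_e`, so `Q̃_D` is a pyramid over `Q̃_{D-e}` whose apex is at lattice distance one. The
lattice points of `(k + 1) Q̃_D` then split into those of `(k + 1) Q̃_{D-e}` (where the
functional vanishes) and the translates by `x_e` of those of `k Q̃_D`, so
`(1 - t) Ehr_{Q̃_D}(t) = Ehr_{Q̃_{D-e}}(t)`; since the dimension also goes up by one, the two
`h^*`-polynomials coincide.
-/

open Bornology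

section Lattice

variable {ι : Type*}

def latticePoints (Q : Set (ι → ℝ)) : Set (ι → ℤ) := {p | (Int.cast ∘ p : ι → ℝ) ∈ Q}

variable [Fintype ι]

lemma latCount_eq_ncard (Q : Set (ι → ℝ)) (k : ℕ) :
    latCount Q k = (latticePoints ((k : ℝ) • Q)).ncard :=
  Nat.card_coe_set_eq _

lemma finite_latticePoints {Q : Set (ι → ℝ)} (hQ : IsBounded Q) :
    (latticePoints Q).Finite := by
  have hb : IsBounded (latticePoints Q) :=
    (Isometry.piMap _ fun _ => Real.isometry_intCast).antilipschitz.isBounded_preimage hQ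
  simpa using Metric.finite_isBounded_inter_isClosed IsDiscrete.univ hb isClosed_univ

lemma latCount_zero {Q : Set (ι → ℝ)} (hQ : Q.Nonempty) : latCount Q 0 = 1 := by
  have h0 : latticePoints (0 : Set (ι → ℝ)) = {0} := by
    ext p
    simp [latticePoints, funext_iff]
  rw [latCount_eq_ncard, Nat.cast_zero, Set.zero_smul_set hQ, h0, Set.ncard_singleton]

end Lattice

section Pyramid

variable {E : Type*} [AddCommGroup E] [Module ℝ E] {A : Set E} {l : E →ₗ[ℝ] ℝ} {x y : E}
  {c : ℝ}

lemma map_eq_zero_of_mem_smul_convexHull (hlA : ∀ a ∈ A, l a = 0)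
    (hy : y ∈ c • convexHull ℝ A) : l y = 0 := by
  obtain ⟨z, hz, rfl⟩ := hy
  have hker : convexHull ℝ A ⊆ LinearMap.ker l := convexHull_min hlA (LinearMap.ker l).convex
  simp [LinearMap.mem_ker.1 (hker hz)]

lemma notMem_affineSpan_of_map_eq_zero (hlA : ∀ a ∈ A, l a = 0) (hlx : l x ≠ 0) :
    x ∉ affineSpan ℝ A := fun hx =>
  hlx (LinearMap.mem_ker.1 <| Submodule.mem_toAffineSubspace.1 <|
    affineSpan_le.2 (fun a ha => LinearMap.mem_ker.2 (hlA a ha)) hx)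

lemma mem_smul_convexHull_insert_iff (hA : A.Nonempty) (hlA : ∀ a ∈ A, l a = 0)
    (hlx : l x = 1) (hc : 0 ≤ c) :
    y ∈ c • convexHull ℝ (insert x A) ↔
      0 ≤ l y ∧ l y ≤ c ∧ y - l y • x ∈ (c - l y) • convexHull ℝ A := by
  constructor
  · rintro ⟨q, hq, rfl⟩
    rw [convexHull_insert hA, mem_convexJoin] at hq
    obtain ⟨_, rfl, z, hz, α, β, hα, hβ, hαβ, rfl⟩ := hq
    have hlz : l z = 0 := by
      simpa using map_eq_zero_of_mem_smul_convexHull (c := 1) hlA ⟨z, hz, one_smul ℝ z⟩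
    simp only [map_smul, map_add, hlx, hlz, smul_eq_mul, mul_one, mul_zero, add_zero]
    refine ⟨by positivity, by nlinarith, z, hz, ?_⟩
    rw [show c - c * α = c * β by rw [show β = 1 - α by linarith]; ring]
    simp only [smul_add, smul_smul]
    abel
  · rintro ⟨hly0, hlyc, z, hz, hzy⟩
    change (c - l y) • z = y - l y • x at hzy
    rcases hc.eq_or_lt with rfl | hc
    · obtain ⟨a, ha⟩ := hA
      have hy0 : y = 0 := by
        have hly : l y = 0 := le_antisymm hlyc hly0
        simpa [hly] using hzy.symm
      exact ⟨a, subset_convexHull ℝ _ (Set.mem_insert_of_mem x ha), by simp [hy0]⟩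
    · refine ⟨(l y / c) • x + ((c - l y) / c) • z, ?_, ?_⟩
      · refine convex_convexHull ℝ _ (subset_convexHull ℝ _ (Set.mem_insert x A))
          (convexHull_mono (Set.subset_insert x A) hz) (by positivity)
          (div_nonneg (by linarith) hc.le) ?_
        field_simp
        ring
      · change c • _ = y
        rw [smul_add, smul_smul, smul_smul, mul_div_cancel₀ _ hc.ne', mul_div_cancel₀ _ hc.ne',
          hzy, add_sub_cancel]

lemma mem_smul_convexHull_insert_and_map_eq_zero_iff (hA : A.Nonempty)
    (hlA : ∀ a ∈ A, l a = 0) (hlx : l x = 1) (hc : 0 ≤ c) :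
    y ∈ c • convexHull ℝ (insert x A) ∧ l y = 0 ↔ y ∈ c • convexHull ℝ A := by
  rw [mem_smul_convexHull_insert_iff hA hlA hlx hc]
  constructor
  · rintro ⟨⟨-, -, hy⟩, hly⟩
    simpa [hly] using hy
  · intro hy
    have hly := map_eq_zero_of_mem_smul_convexHull hlA hy
    simpa [hly, hc] using hy

lemma sub_mem_smul_convexHull_insert_iff (hA : A.Nonempty) (hlA : ∀ a ∈ A, l a = 0)
    (hlx : l x = 1) (hc : 0 ≤ c) :
    y - x ∈ c • convexHull ℝ (insert x A) ↔
      y ∈ (c + 1) • convexHull ℝ (insert x A) ∧ 1 ≤ l y := by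
  rw [mem_smul_convexHull_insert_iff hA hlA hlx hc,
    mem_smul_convexHull_insert_iff hA hlA hlx (by linarith), map_sub, hlx,
    show y - x - (l y - 1) • x = y - l y • x by rw [sub_smul, one_smul]; abel,
    show c - (l y - 1) = c + 1 - l y by ring]
  constructor
  · rintro ⟨h1, h2, h3⟩
    exact ⟨⟨by linarith, by linarith, h3⟩, by linarith⟩
  · rintro ⟨⟨-, h2, h3⟩, h1⟩
    exact ⟨by linarith, by linarith, h3⟩

end Pyramid

lemma one_sub_X_mul_mk_eq_mk {R : Type*} [CommRing R] {a b : ℕ → R} (h0 : a 0 = b 0)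
    (hsucc : ∀ k, a (k + 1) = b (k + 1) + a k) :
    (1 - PowerSeries.X) * PowerSeries.mk a = PowerSeries.mk b := by
  ext n
  rw [sub_mul, one_mul, map_sub, PowerSeries.coeff_mk, PowerSeries.coeff_mk]
  cases n with
  | zero => simp [h0]
  | succ k =>
    rw [PowerSeries.coeff_succ_X_mul, PowerSeries.coeff_mk, hsucc, add_sub_cancel_right]

lemma IsHStar.eq_of_one_sub_X_mul_ehrSeries {ι : Type*} [Fintype ι] {Q Q' : Set (ι → ℝ)}
    {p q : Polynomial ℤ} (hdim : pdim Q = pdim Q' + 1)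
    (hehr : (1 - PowerSeries.X) * ehrSeries Q = ehrSeries Q') (hp : IsHStar Q p)
    (hq : IsHStar Q' q) : p = q := by
  have hmk : (PowerSeries.mk fun i => p.coeff i) = PowerSeries.mk fun i => q.coeff i := by
    rw [← hp, ← hq, hdim, pow_succ, mul_assoc, hehr]
  ext n
  simpa using congrArg (PowerSeries.coeff n) hmk

section LatticePyramid

variable {ι : Type*} {A : Set (ι → ℝ)} {l : (ι → ℝ) →ₗ[ℝ] ℝ} {px : ι → ℤ}

lemma pdim_convexHull_insert [Finite ι] {x : ι → ℝ} (hA : A.Nonempty)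
    (hx : x ∉ affineSpan ℝ A) :
    pdim (convexHull ℝ (insert x A)) = pdim (convexHull ℝ A) + 1 := by
  obtain ⟨a, ha⟩ := hA
  have hxa : x -ᵥ a ∉ (affineSpan ℝ A).direction := by
    rwa [AffineSubspace.vsub_right_mem_direction_iff_mem (subset_affineSpan ℝ A ha)]
  rw [pdim, pdim, ← direction_affineSpan, ← direction_affineSpan, affineSpan_convexHull,
    affineSpan_convexHull, ← affineSpan_insert_affineSpan,
    AffineSubspace.direction_affineSpan_insert (subset_affineSpan ℝ A ha), sup_comm,
    Submodule.finrank_sup_span_singleton hxa]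

lemma sub_mem_latticePoints_smul_convexHull_insert_iff (hA : A.Nonempty)
    (hl : ∀ p : ι → ℤ, ∃ m : ℤ, l (Int.cast ∘ p) = m) (hlA : ∀ a ∈ A, l a = 0)
    (hlx : l (Int.cast ∘ px) = 1) {c : ℝ} (hc : 0 ≤ c) (p : ι → ℤ) :
    p - px ∈ latticePoints (c • convexHull ℝ (insert (Int.cast ∘ px) A)) ↔
      p ∈ latticePoints ((c + 1) • convexHull ℝ (insert (Int.cast ∘ px) A)) ∧
        l (Int.cast ∘ p) ≠ 0 := by
  obtain ⟨m, hm⟩ := hl p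
  have hcast : (Int.cast ∘ (p - px) : ι → ℝ) = Int.cast ∘ p - Int.cast ∘ px := by
    ext
    simp
  rw [latticePoints, latticePoints, Set.mem_ofPred_eq, Set.mem_ofPred_eq, hcast,
    sub_mem_smul_convexHull_insert_iff hA hlA hlx hc]
  refine and_congr_right fun hp => ?_
  have hm0 : (0 : ℤ) ≤ m := by
    have := ((mem_smul_convexHull_insert_iff hA hlA hlx (by linarith)).1 hp).1
    rw [hm] at this
    exact_mod_cast this
  rw [hm]
  norm_cast
  omega

variable [Fintype ι]

lemma latCount_convexHull_insert_succ (hA : A.Nonempty) (hAb : IsBounded A)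
    (hl : ∀ p : ι → ℤ, ∃ m : ℤ, l (Int.cast ∘ p) = m) (hlA : ∀ a ∈ A, l a = 0)
    (hlx : l (Int.cast ∘ px) = 1) (k : ℕ) :
    latCount (convexHull ℝ (insert (Int.cast ∘ px) A)) (k + 1) =
      latCount (convexHull ℝ A) (k + 1) +
        latCount (convexHull ℝ (insert (Int.cast ∘ px) A)) k := by
  set Q := convexHull ℝ (insert (Int.cast ∘ px : ι → ℝ) A)
  set L := latticePoints (((k + 1 : ℕ) : ℝ) • Q)
  set H := {p : ι → ℤ | l (Int.cast ∘ p) = 0}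
  have hon : L ∩ H = latticePoints (((k + 1 : ℕ) : ℝ) • convexHull ℝ A) := by
    ext p
    exact mem_smul_convexHull_insert_and_map_eq_zero_iff hA hlA hlx (Nat.cast_nonneg _)
  have hoff : L \ H = (· + px) '' latticePoints ((k : ℝ) • Q) := by
    ext p
    rw [Set.image_add_right, Set.mem_preimage, ← sub_eq_add_neg,
      sub_mem_latticePoints_smul_convexHull_insert_iff hA hl hlA hlx (Nat.cast_nonneg k),
      ← Nat.cast_succ]
    rfl
  have hfin : L.Finite :=
    finite_latticePoints ((isBounded_convexHull.2 (hAb.insert _)).smul₀ _)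
  rw [latCount_eq_ncard, latCount_eq_ncard, latCount_eq_ncard,
    ← Set.ncard_inter_add_ncard_sdiff_eq_ncard L H hfin, hon, hoff,
    Set.ncard_image_of_injective _ (add_left_injective px)]

lemma one_sub_X_mul_ehrSeries_convexHull_insert (hA : A.Nonempty) (hAb : IsBounded A)
    (hl : ∀ p : ι → ℤ, ∃ m : ℤ, l (Int.cast ∘ p) = m) (hlA : ∀ a ∈ A, l a = 0)
    (hlx : l (Int.cast ∘ px) = 1) :
    (1 - PowerSeries.X) * ehrSeries (convexHull ℝ (insert (Int.cast ∘ px) A)) =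
      ehrSeries (convexHull ℝ A) := by
  refine one_sub_X_mul_mk_eq_mk ?_ fun k => ?_
  · rw [latCount_zero (convexHull_nonempty_iff.2 (Set.insert_nonempty _ _)),
      latCount_zero (convexHull_nonempty_iff.2 hA)]
  · rw [latCount_convexHull_insert_succ hA hAb hl hlA hlx k, Nat.cast_add]

theorem IsHStar.eq_of_convexHull_insert (hA : A.Nonempty) (hAb : IsBounded A)
    (hl : ∀ p : ι → ℤ, ∃ m : ℤ, l (Int.cast ∘ p) = m) (hlA : ∀ a ∈ A, l a = 0)
    (hlx : l (Int.cast ∘ px) = 1) {p q : Polynomial ℤ}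
    (hp : IsHStar (convexHull ℝ (insert (Int.cast ∘ px) A)) p)
    (hq : IsHStar (convexHull ℝ A) q) : p = q :=
  hp.eq_of_one_sub_X_mul_ehrSeries
    (pdim_convexHull_insert hA (notMem_affineSpan_of_map_eq_zero hlA (by simp [hlx])))
    (one_sub_X_mul_ehrSeries_convexHull_insert hA hAb hl hlA hlx) hq

end LatticePyramid

section Digraph

variable {V E : Type*} (t h : E → V)

lemma reachable_tail_head_underlyingOn {S : Set E} {f : E} (hf : f ∈ S) :
    (underlyingOn t h S).Reachable (t f) (h f) := by
  by_cases hloop : t f = h f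
  · rw [hloop]
  · exact SimpleGraph.Adj.reachable
      ((SimpleGraph.fromRel_adj _ _ _).2 ⟨hloop, Or.inl ⟨f, hf, rfl, rfl⟩⟩)

lemma preconnected_underlyingOn_of_reachable {S T : Set E}
    (hT : (underlyingOn t h T).Preconnected)
    (hS : ∀ f ∈ T, (underlyingOn t h S).Reachable (t f) (h f)) :
    (underlyingOn t h S).Preconnected := by
  intro u v
  obtain ⟨w⟩ := hT u v
  induction w with
  | nil => rfl
  | cons hadj _ ih =>
    obtain ⟨-, ⟨f, hf, rfl, rfl⟩ | ⟨f, hf, rfl, rfl⟩⟩ :=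
      (SimpleGraph.fromRel_adj _ _ _).1 hadj
    · exact (hS f hf).trans ih
    · exact (hS f hf).symm.trans ih

lemma exists_cut_of_not_connected [Fintype V] {e : E}
    (hconn : (underlyingOn t h Set.univ).Preconnected)
    (hbridge : ¬(underlyingOn t h {f | f ≠ e}).Connected) :
    ∃ S : Finset V, h e ∈ S ∧ t e ∉ S ∧ ∀ f, f ≠ e → (h f ∈ S ↔ t f ∈ S) := by
  classical
  set G := underlyingOn t h {f | f ≠ e}
  refine ⟨{v | G.Reachable (h e) v}.toFinset, by simp, fun hte => hbridge ?_, fun f hf => ?_⟩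
  · refine (SimpleGraph.connected_iff _).2
      ⟨preconnected_underlyingOn_of_reachable t h hconn fun f _ => ?_, ⟨h e⟩⟩
    by_cases hfe : f = e
    · subst hfe
      exact (Set.mem_toFinset.1 hte).symm
    · exact reachable_tail_head_underlyingOn t h hfe
  · have htf := reachable_tail_head_underlyingOn t h (S := {f | f ≠ e}) hf
    simp only [Set.mem_toFinset, Set.mem_ofPred_eq]
    exact ⟨fun hr => hr.trans htf.symm, fun hr => hr.trans htf⟩

variable [DecidableEq V]

lemma sum_proj_xvec (S : Finset V) (f : E) :
    (∑ v ∈ S, LinearMap.proj v : (V → ℝ) →ₗ[ℝ] ℝ) (xvec t h f) =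
      (if h f ∈ S then 1 else 0) - if t f ∈ S then 1 else 0 := by
  simp [xvec, Finset.sum_sub_distrib]

lemma finite_image_xvec [Finite V] (S : Set E) : (xvec t h '' S).Finite :=
  (Set.finite_range (xvec Prod.fst Prod.snd)).subset
    (Set.image_subset_iff.2 fun f _ => ⟨(t f, h f), rfl⟩)

lemma exists_intCast_comp_eq_xvec (f : E) : ∃ p : V → ℤ, Int.cast ∘ p = xvec t h f :=
  ⟨fun v => (if v = h f then 1 else 0) - if v = t f then 1 else 0, by ext v; simp [xvec]⟩

end Digraph

theorem stmt18_general {V E : Type*} [Fintype V] [DecidableEq V]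
    (t h : E → V) (hconn : (underlyingOn t h Set.univ).Connected) (e : E)
    (hbridge : ¬(underlyingOn t h {f | f ≠ e}).Connected) :
    rootPolyOn t h Set.univ =
      convexHull ℝ (rootPolyOn t h {f | f ≠ e} ∪ {xvec t h e}) ∧
    xvec t h e ∉ affineSpan ℝ (rootPolyOn t h {f | f ≠ e}) ∧
    (∀ p q : Polynomial ℤ,
      IsHStar (rootPolyOn t h Set.univ) p →
      IsHStar (rootPolyOn t h {f | f ≠ e}) q → p = q) := by
  obtain ⟨S, heS, teS, hcut⟩ := exists_cut_of_not_connected t h hconn.preconnected hbridge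
  set l : (V → ℝ) →ₗ[ℝ] ℝ := ∑ v ∈ S, LinearMap.proj v
  set A : Set (V → ℝ) := {0} ∪ xvec t h '' {f | f ≠ e}
  have hA : A.Nonempty := ⟨0, Or.inl rfl⟩
  have hAb : IsBounded A :=
    ((Set.finite_singleton 0).union (finite_image_xvec t h _)).isBounded
  have hl (p : V → ℤ) : ∃ m : ℤ, l (Int.cast ∘ p) = m :=
    ⟨∑ v ∈ S, p v, by simp [l]⟩
  have hlA : ∀ a ∈ A, l a = 0 := by
    rintro _ (rfl | ⟨f, hf, rfl⟩)
    · exact map_zero l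
    · by_cases htf : t f ∈ S <;> simp [l, sum_proj_xvec, htf, hcut f hf]
  have hlx : l (xvec t h e) = 1 := by simp [l, sum_proj_xvec, heS, teS]
  have hQ : rootPolyOn t h Set.univ = convexHull ℝ (insert (xvec t h e) A) := by
    have huniv : (Set.univ : Set E) = insert e {f | f ≠ e} := by
      ext f
      by_cases hfe : f = e <;> simp [hfe]
    rw [rootPolyOn, huniv, Set.image_insert_eq, Set.union_insert]
  refine ⟨?_, ?_, fun p q hp hq => ?_⟩
  · rw [hQ, rootPolyOn, convexHull_convexHull_union_left, Set.union_singleton]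
  · rw [rootPolyOn, affineSpan_convexHull]
    exact notMem_affineSpan_of_map_eq_zero hlA (by simp [hlx])
  · obtain ⟨pe, hpe⟩ := exists_intCast_comp_eq_xvec t h e
    rw [hQ, ← hpe] at hp
    exact hp.eq_of_convexHull_insert hA hAb hl hlA (hpe ▸ hlx) hq

/-- if `e` is a bridge of the weakly connected digraph `D`, then
`Q̃_D` is the cone over `Q̃_{D-e}` with apex `x_e` (it equals
`conv(Q̃_{D-e} ∪ {x_e})` and `x_e` is not in the affine hull of `Q̃_{D-e}`), and the
two polytopes have the same `h^*`-polynomial. -/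
theorem stmt18 {V E : Type*} [Fintype V] [Fintype E] [DecidableEq V]
    (t h : E → V) (hconn : (underlyingOn t h Set.univ).Connected) (e : E)
    (hbridge : ¬(underlyingOn t h {f | f ≠ e}).Connected) :
    rootPolyOn t h Set.univ =
      convexHull ℝ (rootPolyOn t h {f | f ≠ e} ∪ {xvec t h e}) ∧
    xvec t h e ∉ affineSpan ℝ (rootPolyOn t h {f | f ≠ e}) ∧
    (∀ p q : Polynomial ℤ,
      IsHStar (rootPolyOn t h Set.univ) p →
      IsHStar (rootPolyOn t h {f | f ≠ e}) q → p = q) :=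
  stmt18_general t h hconn e hbridge
end

section
/- Let D be a digraph, and suppose λ, μ : E → ℝ are two vectors supported on spanning trees T_1, T_2 respectively with Σ_e (λ_e − μ_e) x_e = 0 and λ ≠ μ. Then there exists a signed cycle C⁺ ⊔ C⁻ of D with C⁺ ⊆ {e : λ_e − μ_e > 0} and C⁻ ⊆ {e : λ_e − μ_e < 0}. -/
open Finset Pointwise

section Aux19

set_option linter.unusedSectionVars false

variable {V E : Type*} [Fintype V] [Fintype E] [DecidableEq V] [DecidableEq E]

/-- Source of an edge after reorienting along the sign of `φ`. -/
noncomputable def esrc (t h : E → V) (φ : E → ℝ) (f : E) : V :=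
  if 0 < φ f then t f else h f

/-- Destination of an edge after reorienting along the sign of `φ`. -/
noncomputable def edst (t h : E → V) (φ : E → ℝ) (f : E) : V :=
  if 0 < φ f then h f else t f

lemma circ_at (t h : E → V) (φ : E → ℝ) (hc : ∑ f, φ f • xvec t h f = 0) (u : V) :
    ∑ f, φ f * ((if u = h f then (1:ℝ) else 0) - (if u = t f then 1 else 0)) = 0 := by
  have h2 := congrFun hc u
  simpa [xvec, Finset.sum_apply] using h2

lemma stepA (t h : E → V) (φ : E → ℝ) (hc : ∑ f, φ f • xvec t h f = 0)
    (hnl : ∀ f, φ f ≠ 0 → t f ≠ h f) (f : E) (hf : φ f ≠ 0) :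
    ∃ g, φ g ≠ 0 ∧ esrc t h φ g = edst t h φ f := by
  by_contra hcon
  push_neg at hcon
  set u := edst t h φ f with hu
  have hsum := circ_at t h φ hc u
  have hnonneg : ∀ g ∈ Finset.univ,
      0 ≤ φ g * ((if u = h g then (1:ℝ) else 0) - (if u = t g then 1 else 0)) := by
    intro g _
    rcases lt_trichotomy (φ g) 0 with hg | hg | hg
    · have hs : esrc t h φ g = h g := by simp [esrc, not_lt.2 hg.le]
      have hne : u ≠ h g := fun he => hcon g hg.ne (by rw [hs, he])
      have hth : (if u = h g then (1:ℝ) else 0) = 0 := by simp [hne]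
      rw [hth]
      rcases eq_or_ne u (t g) with h' | h' <;> simp [h'] <;> nlinarith
    · simp [hg]
    · have hs : esrc t h φ g = t g := by simp [esrc, hg]
      have hne : u ≠ t g := fun he => hcon g hg.ne' (by rw [hs, he])
      have hth : (if u = t g then (1:ℝ) else 0) = 0 := by simp [hne]
      rw [hth]
      rcases eq_or_ne u (h g) with h' | h' <;> simp [h'] <;> nlinarith
  have hall := (Finset.sum_eq_zero_iff_of_nonneg hnonneg).1 hsum f (Finset.mem_univ f)
  rcases lt_trichotomy (φ f) 0 with hg | hg | hg
  · have hd : u = t f := by simp [hu, edst, not_lt.2 hg.le]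
    have hne : u ≠ h f := by rw [hd]; exact hnl f hf
    rw [if_neg hne, if_pos hd] at hall
    simp at hall
    exact hg.ne hall
  · exact hf hg
  · have hd : u = h f := by simp [hu, edst, hg]
    have hne : u ≠ t f := by rw [hd]; exact (hnl f hf).symm
    rw [if_pos hd, if_neg hne] at hall
    simp at hall
    exact hg.ne' hall

lemma xvec_loop (t h : E → V) (f : E) (hl : t f = h f) : xvec t h f = 0 := by
  funext v; simp [xvec, hl]

lemma loop_cycle (t h : E → V) (f : E) (hl : t f = h f) :
    IsSignedCycle t h {f} ∅ ∧ IsSignedCycle t h ∅ {f} := by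
  have hmin : ∀ φ : E → ℝ, IsCirculation t h φ → φ ≠ 0 →
      (∀ g, φ g ≠ 0 → g ∈ ({f} : Finset E)) → ∀ g ∈ ({f} : Finset E), φ g ≠ 0 := by
    intro φ _ hφne hsupp g hg
    simp only [Finset.mem_singleton] at hg
    subst hg
    intro hzf
    apply hφne
    funext g'
    simp only [Pi.zero_apply]
    by_contra hg'
    have := hsupp g' hg'
    simp only [Finset.mem_singleton] at this
    exact hg' (by rw [this, hzf])
  have hcirc1 : IsCirculation t h (chiVec {f} ∅) := by
    unfold IsCirculation
    have : ∀ g, chiVec ({f} : Finset E) ∅ g • xvec t h g = 0 := by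
      intro g
      rcases eq_or_ne g f with rfl | hg
      · rw [xvec_loop t h g hl]; simp
      · simp [chiVec, hg]
    simp [this]
  have hcirc2 : IsCirculation t h (chiVec ∅ {f}) := by
    unfold IsCirculation
    have : ∀ g, chiVec (∅ : Finset E) {f} g • xvec t h g = 0 := by
      intro g
      rcases eq_or_ne g f with rfl | hg
      · rw [xvec_loop t h g hl]; simp
      · simp [chiVec, hg]
    simp [this]
  refine ⟨⟨by simp, by simp, hcirc1, by simpa using hmin⟩,
          ⟨by simp, by simp, hcirc2, by simpa using hmin⟩⟩

lemma exists_conformal_cycle (t h : E → V) (φ : E → ℝ)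
    (hc : ∑ f, φ f • xvec t h f = 0) (hne : φ ≠ 0) :
    ∃ Cp Cm : Finset E, IsSignedCycle t h Cp Cm ∧
      (∀ f ∈ Cp, 0 < φ f) ∧ (∀ f ∈ Cm, φ f < 0) := by
  obtain ⟨f0, hf0⟩ : ∃ f, φ f ≠ 0 := by
    by_contra hcon
    push_neg at hcon
    exact hne (funext fun f => hcon f)
  by_cases hloop : ∃ f, φ f ≠ 0 ∧ t f = h f
  · obtain ⟨f, hf, hl⟩ := hloop
    rcases hf.lt_or_gt with hfneg | hfpos
    · exact ⟨∅, {f}, (loop_cycle t h f hl).2, by simp, by simpa using hfneg⟩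
    · exact ⟨{f}, ∅, (loop_cycle t h f hl).1, by simpa using hfpos, by simp⟩
  · push_neg at hloop
    have hnl : ∀ f, φ f ≠ 0 → t f ≠ h f := hloop
    have hstep : ∀ p : {f : E // φ f ≠ 0}, ∃ q : {f : E // φ f ≠ 0},
        esrc t h φ q.1 = edst t h φ p.1 := by
      intro p
      obtain ⟨g, hg, hge⟩ := stepA t h φ hc hnl p.1 p.2
      exact ⟨⟨g, hg⟩, hge⟩
    choose nxt hnxt using hstep
    set e : ℕ → {f : E // φ f ≠ 0} := fun n => nxt^[n] ⟨f0, hf0⟩ with he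
    have hesucc : ∀ n, e (n+1) = nxt (e n) := fun n => Function.iterate_succ_apply' nxt n _
    set vtx : ℕ → V := fun n => esrc t h φ (e n).1 with hvtxdef
    have hee : ∀ n, vtx (n+1) = edst t h φ (e n).1 := by
      intro n
      show esrc t h φ (e (n+1)).1 = edst t h φ (e n).1
      rw [hesucc]
      exact hnxt (e n)
    have hexists : ∃ n : ℕ, ∃ m : ℕ, m < n ∧ vtx m = vtx n := by
      obtain ⟨a, b, hab, hm⟩ := Fintype.exists_ne_map_eq_of_card_lt
        (fun i : Fin (Fintype.card V + 1) => vtx i) (by simp)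
      rcases lt_or_gt_of_ne hab with h' | h'
      · exact ⟨b, a, h', hm⟩
      · exact ⟨a, b, h', hm.symm⟩
    set j := Nat.find hexists with hj
    obtain ⟨i, hij, hvij⟩ : ∃ m, m < j ∧ vtx m = vtx j := Nat.find_spec hexists
    have hinj : ∀ m n, m < j → n < j → vtx m = vtx n → m = n := by
      intro m n hm hn heq
      rcases lt_trichotomy m n with h' | h' | h'
      · exact absurd ⟨m, h', heq⟩ (Nat.find_min hexists hn)
      · exact h'
      · exact absurd ⟨n, h', heq.symm⟩ (Nat.find_min hexists hm)
    set C : Finset E := (Finset.Ico i j).image (fun k => (e k).1) with hCdef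
    have heinj : ∀ m ∈ Finset.Ico i j, ∀ n ∈ Finset.Ico i j, (e m).1 = (e n).1 → m = n := by
      intro m hm n hn hmn
      rw [Finset.mem_Ico] at hm hn
      refine hinj m n hm.2 hn.2 ?_
      show esrc t h φ (e m).1 = esrc t h φ (e n).1
      rw [hmn]
    set Cp : Finset E := C.filter (fun f => 0 < φ f) with hCp
    set Cm : Finset E := C.filter (fun f => φ f < 0) with hCm
    have hmemC : ∀ f ∈ C, φ f ≠ 0 := by
      intro f hf
      rw [hCdef, Finset.mem_image] at hf
      obtain ⟨k, _, hk⟩ := hf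
      exact hk ▸ (e k).2
    have hunion : Cp ∪ Cm = C := by
      ext f
      simp only [hCp, hCm, Finset.mem_union, Finset.mem_filter]
      constructor
      · rintro (⟨h1, _⟩ | ⟨h1, _⟩) <;> exact h1
      · intro hfC
        rcases (hmemC f hfC).lt_or_gt with h' | h'
        · exact Or.inr ⟨hfC, h'⟩
        · exact Or.inl ⟨hfC, h'⟩
    have hdisj : Disjoint Cp Cm := by
      rw [Finset.disjoint_left]
      intro f h1 h2
      rw [hCp, Finset.mem_filter] at h1
      rw [hCm, Finset.mem_filter] at h2
      linarith [h1.2, h2.2]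
    have hiC : (e i).1 ∈ C := by
      rw [hCdef]
      exact Finset.mem_image_of_mem _ (Finset.mem_Ico.2 ⟨le_refl i, hij⟩)
    have hchiC : ∀ k ∈ Finset.Ico i j,
        chiVec Cp Cm (e k).1 • xvec t h (e k).1 =
          (fun v => if v = vtx (k+1) then (1:ℝ) else 0) -
            (fun v => if v = vtx k then (1:ℝ) else 0) := by
      intro k hk
      have hfC : (e k).1 ∈ C := by rw [hCdef]; exact Finset.mem_image_of_mem _ hk
      have hsrc : vtx k = esrc t h φ (e k).1 := rfl
      have hdst : vtx (k+1) = edst t h φ (e k).1 := hee k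
      rcases (e k).2.lt_or_gt with hneg | hpos
      · have h1 : (e k).1 ∉ Cp := by
          rw [hCp, Finset.mem_filter]; push_neg; intro _; linarith
        have h2 : (e k).1 ∈ Cm := by rw [hCm, Finset.mem_filter]; exact ⟨hfC, hneg⟩
        have hch : chiVec Cp Cm (e k).1 = -1 := by simp [chiVec, h1, h2]
        rw [hch]
        funext v
        have hs2 : esrc t h φ (e k).1 = h (e k).1 := by simp [esrc, not_lt.2 hneg.le]
        have hd2 : edst t h φ (e k).1 = t (e k).1 := by simp [edst, not_lt.2 hneg.le]
        rw [Pi.sub_apply]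
        rw [hsrc, hdst, hs2, hd2]
        simp only [Pi.smul_apply, smul_eq_mul, xvec]
        ring
      · have h1 : (e k).1 ∈ Cp := by rw [hCp, Finset.mem_filter]; exact ⟨hfC, hpos⟩
        have h2 : (e k).1 ∉ Cm := by
          rw [hCm, Finset.mem_filter]; push_neg; intro _; linarith
        have hch : chiVec Cp Cm (e k).1 = 1 := by simp [chiVec, h1, h2]
        rw [hch]
        funext v
        have hs2 : esrc t h φ (e k).1 = t (e k).1 := by simp [esrc, hpos]
        have hd2 : edst t h φ (e k).1 = h (e k).1 := by simp [edst, hpos]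
        rw [Pi.sub_apply]
        rw [hsrc, hdst, hs2, hd2]
        simp only [Pi.smul_apply, smul_eq_mul, xvec]
        ring
    have hcircC : IsCirculation t h (chiVec Cp Cm) := by
      unfold IsCirculation
      have hout : ∀ f ∈ Finset.univ, f ∉ C → chiVec Cp Cm f • xvec t h f = 0 := by
        intro f _ hf
        have h1 : f ∉ Cp := fun h' => hf (hunion ▸ Finset.mem_union_left _ h')
        have h2 : f ∉ Cm := fun h' => hf (hunion ▸ Finset.mem_union_right _ h')
        simp [chiVec, h1, h2]
      rw [← Finset.sum_subset (Finset.subset_univ C) hout]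
      rw [hCdef, Finset.sum_image heinj]
      rw [Finset.sum_congr rfl hchiC]
      rw [Finset.sum_Ico_eq_sub _ hij.le]
      rw [Finset.sum_range_sub (fun k => (fun v => if v = vtx k then (1:ℝ) else 0)),
          Finset.sum_range_sub (fun k => (fun v => if v = vtx k then (1:ℝ) else 0))]
      rw [hvij]
      abel
    have hmin : ∀ ψ : E → ℝ, IsCirculation t h ψ → ψ ≠ 0 →
        (∀ f, ψ f ≠ 0 → f ∈ Cp ∪ Cm) → ∀ f ∈ Cp ∪ Cm, ψ f ≠ 0 := by
      intro ψ hψc hψne hsupp f hf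
      rw [hunion] at hsupp hf
      have hzout : ∀ g, g ∉ C → ψ g = 0 := by
        intro g hg
        by_contra hg'
        exact hg (hsupp g hg')
      have hadj : ∀ k, i ≤ k → k + 1 < j → (ψ (e k).1 = 0 ↔ ψ (e (k+1)).1 = 0) := by
        intro k hk hk1
        have hsum := circ_at t h ψ hψc (vtx (k+1))
        have hstep1 : ∑ g ∈ C, ψ g *
            ((if vtx (k+1) = h g then (1:ℝ) else 0) - (if vtx (k+1) = t g then 1 else 0)) = 0 := by
          rw [Finset.sum_subset (Finset.subset_univ C)
            (fun g _ hg => by rw [hzout g hg]; ring)]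
          exact hsum
        rw [hCdef, Finset.sum_image heinj] at hstep1
        have hpairsub : ({k, k+1} : Finset ℕ) ⊆ Finset.Ico i j := by
          intro m hm
          simp only [Finset.mem_insert, Finset.mem_singleton] at hm
          rcases hm with rfl | rfl
          · exact Finset.mem_Ico.2 ⟨hk, Nat.lt_of_succ_lt hk1⟩
          · exact Finset.mem_Ico.2 ⟨le_trans hk (Nat.le_succ k), hk1⟩
        have hvanish : ∀ m ∈ Finset.Ico i j, m ∉ ({k, k+1} : Finset ℕ) →
            ψ (e m).1 * ((if vtx (k+1) = h (e m).1 then (1:ℝ) else 0) -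
              (if vtx (k+1) = t (e m).1 then 1 else 0)) = 0 := by
          intro m hm hm'
          simp only [Finset.mem_insert, Finset.mem_singleton, not_or] at hm'
          rw [Finset.mem_Ico] at hm
          have humv : vtx (k+1) ≠ vtx m := by
            intro heq
            exact hm'.2 (hinj (k+1) m hk1 hm.2 heq).symm
          have humv1 : vtx (k+1) ≠ vtx (m+1) := by
            intro heq
            rcases lt_or_eq_of_le (Nat.succ_le_of_lt hm.2) with h' | h'
            · have := hinj (k+1) (m+1) hk1 h' heq
              omega
            · rw [show m + 1 = j from h'] at heq
              have h2 : vtx (k+1) = vtx i := heq.trans hvij.symm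
              have := hinj (k+1) i hk1 hij h2
              omega
          have hsd : (t (e m).1 = vtx m ∨ t (e m).1 = vtx (m+1)) ∧
                     (h (e m).1 = vtx m ∨ h (e m).1 = vtx (m+1)) := by
            have h1 : vtx m = esrc t h φ (e m).1 := rfl
            have h2 : vtx (m+1) = edst t h φ (e m).1 := hee m
            by_cases hp : 0 < φ (e m).1
            · exact ⟨Or.inl (by rw [h1]; simp [esrc, hp]),
                     Or.inr (by rw [h2]; simp [edst, hp])⟩
            · exact ⟨Or.inr (by rw [h2]; simp [edst, hp]),
                     Or.inl (by rw [h1]; simp [esrc, hp])⟩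
          have ht0 : (if vtx (k+1) = t (e m).1 then (1:ℝ) else 0) = 0 := by
            rcases hsd.1 with h' | h' <;> rw [h'] <;> simp [humv, humv1]
          have hh0 : (if vtx (k+1) = h (e m).1 then (1:ℝ) else 0) = 0 := by
            rcases hsd.2 with h' | h' <;> rw [h'] <;> simp [humv, humv1]
          rw [ht0, hh0]
          ring
        rw [← Finset.sum_subset hpairsub hvanish] at hstep1
        rw [Finset.sum_pair (by omega : k ≠ k+1)] at hstep1
        -- compute the two coefficients
        have hAk : ((if vtx (k+1) = h (e k).1 then (1:ℝ) else 0) -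
            (if vtx (k+1) = t (e k).1 then 1 else 0)) = 1 ∨
            ((if vtx (k+1) = h (e k).1 then (1:ℝ) else 0) -
            (if vtx (k+1) = t (e k).1 then 1 else 0)) = -1 := by
          have hdst : vtx (k+1) = edst t h φ (e k).1 := hee k
          have hnl' := hnl (e k).1 (e k).2
          by_cases hp : 0 < φ (e k).1
          · have hd2 : edst t h φ (e k).1 = h (e k).1 := by simp [edst, hp]
            have h1 : vtx (k+1) = h (e k).1 := hdst.trans hd2
            have h2 : vtx (k+1) ≠ t (e k).1 := by
              rw [h1]; exact fun he => hnl' (he.symm)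
            left; rw [if_pos h1, if_neg h2]; ring
          · have hd2 : edst t h φ (e k).1 = t (e k).1 := by simp [edst, hp]
            have h1 : vtx (k+1) = t (e k).1 := hdst.trans hd2
            have h2 : vtx (k+1) ≠ h (e k).1 := by
              rw [h1]; exact fun he => hnl' he
            right; rw [if_neg h2, if_pos h1]; ring
        have hBk : ((if vtx (k+1) = h (e (k+1)).1 then (1:ℝ) else 0) -
            (if vtx (k+1) = t (e (k+1)).1 then 1 else 0)) = 1 ∨
            ((if vtx (k+1) = h (e (k+1)).1 then (1:ℝ) else 0) -
            (if vtx (k+1) = t (e (k+1)).1 then 1 else 0)) = -1 := by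
          have hsrc : vtx (k+1) = esrc t h φ (e (k+1)).1 := rfl
          have hnl' := hnl (e (k+1)).1 (e (k+1)).2
          by_cases hp : 0 < φ (e (k+1)).1
          · have hs2 : esrc t h φ (e (k+1)).1 = t (e (k+1)).1 := by simp [esrc, hp]
            have h1 : vtx (k+1) = t (e (k+1)).1 := hsrc.trans hs2
            have h2 : vtx (k+1) ≠ h (e (k+1)).1 := by
              rw [h1]; exact fun he => hnl' he
            right; rw [if_neg h2, if_pos h1]; ring
          · have hs2 : esrc t h φ (e (k+1)).1 = h (e (k+1)).1 := by simp [esrc, hp]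
            have h1 : vtx (k+1) = h (e (k+1)).1 := hsrc.trans hs2
            have h2 : vtx (k+1) ≠ t (e (k+1)).1 := by
              rw [h1]; exact fun he => hnl' he.symm
            left; rw [if_pos h1, if_neg h2]; ring
        rcases hAk with hA | hA <;> rcases hBk with hB | hB <;>
          rw [hA, hB] at hstep1 <;>
          constructor <;> intro h0 <;> nlinarith [hstep1]
      have hchain : ∀ k, i ≤ k → (k < j → (ψ (e i).1 = 0 ↔ ψ (e k).1 = 0)) := by
        intro k hk
        induction k, hk using Nat.le_induction with
        | base => intro _; exact Iff.rfl
        | succ n hn ih =>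
          intro hnj
          exact (ih (by omega)).trans (hadj n hn hnj)
      obtain ⟨g, hg⟩ : ∃ g, ψ g ≠ 0 := by
        by_contra hcon
        push_neg at hcon
        exact hψne (funext fun g => hcon g)
      have hgC := hsupp g hg
      rw [hCdef, Finset.mem_image] at hgC
      obtain ⟨m, hm, hgm⟩ := hgC
      rw [Finset.mem_Ico] at hm
      have hi0 : ψ (e i).1 ≠ 0 := by
        intro h0
        exact hg (by rw [← hgm]; exact ((hchain m hm.1) hm.2).1 h0)
      rw [hCdef, Finset.mem_image] at hf
      obtain ⟨m', hm', hfm'⟩ := hf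
      rw [Finset.mem_Ico] at hm'
      rw [← hfm']
      intro h0
      exact hi0 (((hchain m' hm'.1) hm'.2).2 h0)
    refine ⟨Cp, Cm, ⟨hdisj, ?_, hcircC, hmin⟩, ?_, ?_⟩
    · rw [hunion]
      exact ⟨(e i).1, hiC⟩
    · intro f hf
      rw [hCp, Finset.mem_filter] at hf
      exact hf.2
    · intro f hf
      rw [hCm, Finset.mem_filter] at hf
      exact hf.2

end Aux19

/-- if `λ` and `μ` are supported on spanning trees `T₁`, `T₂`
respectively, `∑ (λ_f - μ_f) x_f = 0` and `λ ≠ μ`, then there is a signed cycle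
whose positive arc lies in `{f : λ_f - μ_f > 0}` and whose negative arc lies in
`{f : λ_f - μ_f < 0}`. -/
theorem stmt19 {V E : Type*} [Fintype V] [Fintype E] [DecidableEq V] [DecidableEq E]
    (t h : E → V) (T1 T2 : Finset E)
    (hT1 : IsSpanningTree t h T1) (hT2 : IsSpanningTree t h T2)
    (lam mu : E → ℝ)
    (hlam : ∀ f, lam f ≠ 0 → f ∈ T1) (hmu : ∀ f, mu f ≠ 0 → f ∈ T2)
    (hzero : ∑ f, (lam f - mu f) • xvec t h f = 0) (hne : lam ≠ mu) :
    ∃ Cp Cm : Finset E, IsSignedCycle t h Cp Cm ∧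
      (∀ f ∈ Cp, 0 < lam f - mu f) ∧ (∀ f ∈ Cm, lam f - mu f < 0) := by
  have hphi : (fun f => lam f - mu f) ≠ 0 := by
    intro hcon
    apply hne
    funext f
    have := congrFun hcon f
    simp only [Pi.zero_apply] at this
    linarith
  obtain ⟨Cp, Cm, hsc, h1, h2⟩ :=
    exists_conformal_cycle t h (fun f => lam f - mu f) hzero hphi
  exact ⟨Cp, Cm, hsc, h1, h2⟩
end
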